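/- arXiv:1411.0433 — 2 statements merged into one kernel-verified Lean document; each statement's English description precedes it below -/
import Mathlib

section
/- If S ⊆ ℝ^d is r-convex (i.e., S = C_r(S)) and 0 < r' < r, then S is r'-convex: S = C_{r'}(S). -/
/-!
An open `r`-ball is the union of the open `r'`-balls it contains (`0 < r' ≤ r`), so every
`r`-ball missing `S` is covered by `r'`-balls missing `S`. Hence `C_{r'}(S) ⊆ C_r(S)`, and
`S ⊆ C_{r'}(S)` always holds.
-/

open Metric Set

/-- The `r`-convex hull of a set. -/
def rConvexHull {d : ℕ} (r : ℝ) (A : Set (EuclideanSpace ℝ (Fin d))) :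
    Set (EuclideanSpace ℝ (Fin d)) :=
  ⋂₀ {C | ∃ x, C = (Metric.ball x r)ᶜ ∧ Metric.ball x r ∩ A = ∅}

theorem exists_mem_ball_subset_ball {E : Type*} [NormedAddCommGroup E] [NormedSpace ℝ E]
    {x y : E} {r r' : ℝ} (hy : y ∈ ball x r) (hr' : 0 < r') (hrr : r' ≤ r) :
    ∃ c, y ∈ ball c r' ∧ ball c r' ⊆ ball x r := by
  have hr : 0 < r := hr'.trans_le hrr
  have hxy : dist x y < r := by rwa [dist_comm, ← mem_ball]
  have hθ : 0 ≤ 1 - r' / r := sub_nonneg.2 ((div_le_one hr).2 hrr)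
  -- `c` divides the segment `[x, y]` in the ratio `(r - r') : r'`.
  refine ⟨AffineMap.lineMap x y (1 - r' / r), ?_, ball_subset_ball' ?_⟩
  · rw [mem_ball, dist_comm, dist_lineMap_right, sub_sub_cancel, Real.norm_of_nonneg
      (div_pos hr' hr).le]
    calc r' / r * dist x y < r' / r * r := by gcongr
      _ = r' := div_mul_cancel₀ r' hr.ne'
  · rw [dist_lineMap_left, Real.norm_of_nonneg hθ]
    calc r' + (1 - r' / r) * dist x y ≤ r' + (1 - r' / r) * r := by gcongr
      _ = r := by field_simp; ring

theorem mem_rConvexHull {d : ℕ} {r : ℝ} {A : Set (EuclideanSpace ℝ (Fin d))}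
    {y : EuclideanSpace ℝ (Fin d)} :
    y ∈ rConvexHull r A ↔ ∀ x, ball x r ∩ A = ∅ → y ∉ ball x r := by
  simp only [rConvexHull, mem_sInter, mem_ofPred_eq]
  exact ⟨fun h x hx => h _ ⟨x, rfl, hx⟩, by rintro h _ ⟨x, rfl, hx⟩; exact h x hx⟩

theorem subset_rConvexHull {d : ℕ} (r : ℝ) (A : Set (EuclideanSpace ℝ (Fin d))) :
    A ⊆ rConvexHull r A :=
  fun y hy => mem_rConvexHull.2 fun _ hx hyx => (eq_empty_iff_forall_notMem.1 hx) y ⟨hyx, hy⟩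

theorem rConvexHull_subset_rConvexHull_of_le {d : ℕ} {r r' : ℝ}
    (A : Set (EuclideanSpace ℝ (Fin d))) (hr' : 0 < r') (hrr : r' ≤ r) :
    rConvexHull r' A ⊆ rConvexHull r A := by
  intro y hy
  refine mem_rConvexHull.2 fun x hx hyx => ?_
  obtain ⟨c, hyc, hcx⟩ := exists_mem_ball_subset_ball hyx hr' hrr
  have hc : ball c r' ∩ A = ∅ := subset_empty_iff.1 (hx ▸ inter_subset_inter_left A hcx)
  exact mem_rConvexHull.1 hy c hc hyc

theorem rConvex_of_smaller_radius
    (d : ℕ) (S : Set (EuclideanSpace ℝ (Fin d))) (r r' : ℝ)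
    (hr' : 0 < r') (hrr : r' < r) (hS : S = rConvexHull r S) :
    S = rConvexHull r' S := by
  refine (subset_rConvexHull r' S).antisymm ?_
  calc rConvexHull r' S ⊆ rConvexHull r S :=
        rConvexHull_subset_rConvexHull_of_le S hr' hrr.le
    _ = S := hS.symm
end

section
/- Fix constants K > 0, α > 0, β > 0, and d ≥ 1, and define a_n = (Kα/3 · n/(log n)²)^{1/d} for n ≥ 2. Then lim_{n→∞} (1/log n) · [ log(a_n^d) − n K α / ( a_n^d · log(K^{−1} β a_n^d) ) ] = −2. -/
/-! With `x = a_n^d = c n / (log n)²` and `c = Kα/3`, one has `log x = log n - 2 log log n + O(1)`,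
and the same for `log (K⁻¹β x)`; both are therefore `~ log n`. The second term equals
`3 (log n)² / log (K⁻¹β x) ~ 3 log n`, so the bracket is `log n - 3 log n + o(log n)`. -/

open Filter Real Topology

lemma log_const_mul_div_log_sq {c x : ℝ} (hc : c ≠ 0) (hx : 1 < x) :
    log (c * (x / log x ^ 2)) = log c + log x - 2 * log (log x) := by
  have hlog : 0 < log x := log_pos hx
  rw [log_mul hc (by positivity), log_div (by linarith) (by positivity), log_pow]
  push_cast
  ring

lemma tendsto_log_const_mul_div_log_sq_div_log {c : ℝ} (hc : c ≠ 0) :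
    Tendsto (fun x => log (c * (x / log x ^ 2)) / log x) atTop (𝓝 1) := by
  have hinv : Tendsto (fun x => (log x)⁻¹) atTop (𝓝 0) := tendsto_log_atTop.inv_tendsto_atTop
  have hloglog : Tendsto (fun x => log (log x) / log x) atTop (𝓝 0) :=
    isLittleO_log_id_atTop.tendsto_div_nhds_zero.comp tendsto_log_atTop
  have hlim := ((hinv.const_mul (log c)).add_const 1).sub (hloglog.const_mul 2)
  rw [mul_zero, zero_add, mul_zero, sub_zero] at hlim
  refine hlim.congr' ?_
  filter_upwards [eventually_gt_atTop 1] with x hx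
  have hlog : log x ≠ 0 := (log_pos hx).ne'
  rw [log_const_mul_div_log_sq hc hx]
  field_simp

lemma tendsto_inv_log_mul_log_sub_div_mul_log {b c : ℝ} (hb : b ≠ 0) (hc : c ≠ 0) (k : ℝ) :
    Tendsto (fun x => (1 / log x) * (log (c * (x / log x ^ 2)) -
        x * k / (c * (x / log x ^ 2) * log (b * (c * (x / log x ^ 2))))))
      atTop (𝓝 (1 - k / c)) := by
  have hbc : Tendsto (fun x => log (b * (c * (x / log x ^ 2))) / log x) atTop (𝓝 1) := by
    simpa only [mul_assoc] using tendsto_log_const_mul_div_log_sq_div_log (mul_ne_zero hb hc)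
  have hlim := (tendsto_log_const_mul_div_log_sq_div_log hc).sub
    ((hbc.inv₀ one_ne_zero).const_mul (k / c))
  rw [inv_one, mul_one] at hlim
  refine hlim.congr' ?_
  filter_upwards [eventually_gt_atTop 1] with x hx
  have hlog : log x ≠ 0 := (log_pos hx).ne'
  rcases eq_or_ne (log (b * (c * (x / log x ^ 2)))) 0 with hM | hM
  · simp only [hM, zero_div, inv_zero, mul_zero, div_zero, sub_zero]
    ring
  · field_simp

theorem borel_cantelli_rate_limit
    (K α β : ℝ) (hK : 0 < K) (hα : 0 < α) (hβ : 0 < β)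
    (d : ℕ) (hd : 1 ≤ d)
    (a : ℕ → ℝ)
    (ha : ∀ n : ℕ, a n = (K * α / 3 * (n / (Real.log n) ^ 2)) ^ ((1 : ℝ) / d)) :
    Tendsto
      (fun n : ℕ =>
        (1 / Real.log n) *
          (Real.log ((a n) ^ (d : ℕ)) -
            n * K * α / ((a n) ^ (d : ℕ) * Real.log (K⁻¹ * β * (a n) ^ (d : ℕ)))))
      atTop (nhds (-2)) := by
  have ha_pow (n : ℕ) : a n ^ d = K * α / 3 * (n / log n ^ 2) := by
    rw [ha, one_div, rpow_inv_natCast_pow (by positivity) (by omega)]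
  have hlim := (tendsto_inv_log_mul_log_sub_div_mul_log (b := K⁻¹ * β) (by positivity)
    (by positivity : K * α / 3 ≠ 0) (K * α)).comp tendsto_natCast_atTop_atTop
  have hconst : 1 - K * α / (K * α / 3) = (-2 : ℝ) := by
    field_simp
    ring
  rw [hconst] at hlim
  refine hlim.congr fun n => ?_
  simp only [Function.comp_apply, ha_pow, mul_assoc]
end
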